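/- arXiv:2308.14647 — 6 statements merged into one kernel-verified Lean document; each statement's English description precedes it below -/
import Mathlib

section
/- If a DAG task (G, D) satisfies L(G) ≤ D and W(G) ≤ M, then there exist M paths p_1, ..., p_M in G covering all nodes of G, and assigning each path's nodes to a distinct processor in topological order yields a schedule in which every node finishes by time D. -/
namespace EGS

variable {V : Type*}

def AcyclicRel (E : V → V → Prop) : Prop := ∀ v : V, ¬ Relation.TransGen E v v

def IsAntichainIn (E : V → V → Prop) (s : Finset V) : Prop :=
  ∀ a ∈ s, ∀ b ∈ s, a ≠ b → ¬ Relation.TransGen E a b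

noncomputable def dagWidth (E : V → V → Prop) : ℕ :=
  sSup {k : ℕ | ∃ s : Finset V, IsAntichainIn E s ∧ s.card = k}

def pathLen (C : V → ℝ) (l : List V) : ℝ := (l.map C).sum

def IsPath (E : V → V → Prop) (l : List V) : Prop :=
  l ≠ [] ∧ l.Nodup ∧ l.Chain' E

noncomputable def dagLen (E : V → V → Prop) (C : V → ℝ) : ℝ :=
  sSup {x : ℝ | ∃ l : List V, IsPath E l ∧ x = pathLen C l}

noncomputable def EFT (E : V → V → Prop) (C : V → ℝ) (v : V) : ℝ :=
  sSup {x : ℝ | ∃ l : List V, IsPath E l ∧ l.getLast? = some v ∧ x = pathLen C l}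

noncomputable def LST (E : V → V → Prop) (C : V → ℝ) (D : ℝ) (v : V) : ℝ :=
  D - sSup {x : ℝ | ∃ l : List V, IsPath E l ∧ l.head? = some v ∧ x = pathLen C l}

noncomputable def EST (E : V → V → Prop) (C : V → ℝ) (v : V) : ℝ :=
  sSup {x : ℝ | ∃ l : List V, l.Nodup ∧ l.Chain' E ∧
    (∀ u, l.getLast? = some u → E u v) ∧ x = pathLen C l}

noncomputable def tailLen (E : V → V → Prop) (C : V → ℝ) (v : V) : ℝ :=
  sSup {x : ℝ | ∃ l : List V, l.Nodup ∧ l.Chain' E ∧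
    (∀ u, l.head? = some u → E v u) ∧ x = pathLen C l}

noncomputable def LFT (E : V → V → Prop) (C : V → ℝ) (D : ℝ) (v : V) : ℝ :=
  D - tailLen E C v

noncomputable def widthOn (E : V → V → Prop) (S : Set V) : ℕ :=
  sSup {k : ℕ | ∃ s : Finset V, ↑s ⊆ S ∧ IsAntichainIn E s ∧ s.card = k}

noncomputable def lateralWidth (E : V → V → Prop) (v : V) : ℕ :=
  widthOn E {u | u ≠ v ∧ ¬ Relation.TransGen E u v ∧ ¬ Relation.TransGen E v u}


section Dilworth


variable {α : Type*} [Fintype α] [DecidableEq α]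

/-- antichain for a bare relation -/
def AntiF (r : α → α → Prop) (A : Finset α) : Prop :=
  ∀ a ∈ A, ∀ b ∈ A, a ≠ b → ¬ r a b

/-- chain (set) for a bare relation -/
def IsChn (r : α → α → Prop) (T : Finset α) : Prop :=
  ∀ a ∈ T, ∀ b ∈ T, a ≠ b → r a b ∨ r b a

noncomputable def fwidth (r : α → α → Prop) (S : Finset α) : ℕ :=
  sSup {k : ℕ | ∃ A : Finset α, A ⊆ S ∧ AntiF r A ∧ A.card = k}

omit [Fintype α] [DecidableEq α] in
lemma fwidth_bdd (r : α → α → Prop) (S : Finset α) :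
    BddAbove {k : ℕ | ∃ A : Finset α, A ⊆ S ∧ AntiF r A ∧ A.card = k} :=
  ⟨S.card, fun _ ⟨A, hAS, _, hc⟩ => hc ▸ Finset.card_le_card hAS⟩

omit [Fintype α] [DecidableEq α] in
lemma fwidth_ne (r : α → α → Prop) (S : Finset α) :
    {k : ℕ | ∃ A : Finset α, A ⊆ S ∧ AntiF r A ∧ A.card = k}.Nonempty :=
  ⟨0, ∅, by simp [AntiF]⟩

omit [Fintype α] [DecidableEq α] in
lemma le_fwidth {r : α → α → Prop} {S A : Finset α} (hAS : A ⊆ S) (hA : AntiF r A) :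
    A.card ≤ fwidth r S :=
  le_csSup (fwidth_bdd r S) ⟨A, hAS, hA, rfl⟩

omit [Fintype α] [DecidableEq α] in
lemma fwidth_le {r : α → α → Prop} {S : Finset α} {m : ℕ}
    (h : ∀ A : Finset α, A ⊆ S → AntiF r A → A.card ≤ m) : fwidth r S ≤ m :=
  csSup_le (fwidth_ne r S) (fun _ ⟨A, hAS, hA, hc⟩ => hc ▸ h A hAS hA)

omit [Fintype α] [DecidableEq α] in
lemma exists_fwidth_antichain (r : α → α → Prop) (S : Finset α) :
    ∃ A : Finset α, A ⊆ S ∧ AntiF r A ∧ A.card = fwidth r S :=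
  Nat.sSup_mem (fwidth_ne r S) (fwidth_bdd r S)

lemma dilworth_aux (r : α → α → Prop) (htr : Transitive r) (hirr : Irreflexive r) :
    ∀ n (S : Finset α), S.card ≤ n →
    ∃ F : Finset (Finset α), F.card ≤ fwidth r S ∧
      (∀ T ∈ F, T ⊆ S ∧ IsChn r T) ∧
      (∀ T₁ ∈ F, ∀ T₂ ∈ F, T₁ ≠ T₂ → Disjoint T₁ T₂) ∧
      (∀ v ∈ S, ∃ T ∈ F, v ∈ T) := by
  classical
  have wfr : WellFounded (flip r) := by
    haveI : IsTrans α (flip r) := ⟨fun a b c h1 h2 => htr h2 h1⟩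
    haveI : IsIrrefl α (flip r) := ⟨fun a h => hirr a h⟩
    exact Finite.wellFounded_of_trans_of_irrefl _
  intro n
  induction n with
  | zero =>
    intro S hS
    have : S = ∅ := Finset.card_eq_zero.mp (Nat.le_zero.mp hS)
    subst this
    exact ⟨∅, by simp, by simp, by simp, by simp⟩
  | succ n ih =>
    intro S hS
    rcases S.eq_empty_or_nonempty with rfl | hSne
    · exact ⟨∅, by simp, by simp, by simp, by simp⟩
    -- a maximal element of S
    obtain ⟨a, haS', hamax'⟩ := wfr.has_min (↑S) (by exact_mod_cast hSne)
    have haS : a ∈ S := haS'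
    have hamax : ∀ x ∈ S, ¬ r a x := fun x hx h => hamax' x hx h
    set S' := S.erase a with hS'def
    have hS'sub : S' ⊆ S := Finset.erase_subset _ _
    have haS'' : a ∉ S' := Finset.notMem_erase a S
    have hS'card : S'.card ≤ n := by
      have h1 : S'.card = S.card - 1 := by
        rw [hS'def]; exact Finset.card_erase_of_mem haS
      have h2 : 1 ≤ S.card := Finset.card_pos.mpr hSne
      omega
    set k := fwidth r S' with hkdef
    obtain ⟨F', hF'le, hF'chains, hF'disj, hF'cover⟩ := ih S' hS'card
    obtain ⟨A₀, hA₀S, hA₀anti, hA₀card⟩ := exists_fwidth_antichain r S'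
    -- choice function: a covering chain for each element of S'
    have hfex : ∀ x ∈ S', ∃ T ∈ F', x ∈ T := hF'cover
    let f : α → Finset α := fun x => if h : ∃ T ∈ F', x ∈ T then h.choose else ∅
    have hf1 : ∀ x ∈ S', f x ∈ F' ∧ x ∈ f x := by
      intro x hx
      have h := hfex x hx
      simp only [f, dif_pos h]
      exact ⟨h.choose_spec.1, h.choose_spec.2⟩
    have hfinj : ∀ A : Finset α, A ⊆ S' → AntiF r A →
        ∀ x ∈ A, ∀ y ∈ A, f x = f y → x = y := by
      intro A hAS hAanti x hx y hy hxy
      by_contra hne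
      have hxT := hf1 x (hAS hx)
      have hyT := hf1 y (hAS hy)
      have hchn := (hF'chains _ hxT.1).2
      have := hchn x hxT.2 y (hxy ▸ hyT.2) hne
      rcases this with h | h
      · exact hAanti x hx y hy hne h
      · exact hAanti y hy x hx (Ne.symm hne) h
    have hF'k : F'.card = k := by
      refine le_antisymm hF'le ?_
      rw [hkdef, ← hA₀card]
      exact Finset.card_le_card_of_injOn f (fun x hx => (hf1 x (hA₀S hx)).1)
        (fun x hx y hy h => hfinj A₀ hA₀S hA₀anti x hx y hy h)
    -- every k-antichain of S' meets every chain of F'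
    have hmeets : ∀ A : Finset α, A ⊆ S' → AntiF r A → A.card = k →
        ∀ T ∈ F', ∃ b ∈ A, b ∈ T := by
      intro A hAS hAanti hAcard T hT
      have hsurj := Finset.surj_on_of_inj_on_of_card_le (s := A) (t := F')
        (fun x _ => f x) (fun x hx => (hf1 x (hAS hx)).1)
        (fun x y hx hy h => hfinj A hAS hAanti x hx y hy h)
        (by rw [hF'k, hAcard])
      obtain ⟨b, hb, hfb⟩ := hsurj T hT
      exact ⟨b, hb, hfb ▸ (hf1 b (hAS hb)).2⟩
    -- top element of each chain
    let Q : Finset α → α → Prop := fun T x =>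
      x ∈ T ∧ ∃ A : Finset α, A ⊆ S' ∧ AntiF r A ∧ A.card = k ∧ x ∈ A
    have htopex : ∀ T ∈ F', ∃ m, Q T m ∧ ∀ x, Q T x → ¬ r m x := by
      intro T hT
      obtain ⟨b, hbA, hbT⟩ := hmeets A₀ hA₀S hA₀anti hA₀card T hT
      obtain ⟨m, hm, hmax⟩ := wfr.has_min {x | Q T x}
        ⟨b, hbT, A₀, hA₀S, hA₀anti, hA₀card, hbA⟩
      exact ⟨m, hm, fun x hx h => hmax x hx h⟩
    let top : Finset α → α := fun T =>
      if h : ∃ m, Q T m ∧ ∀ x, Q T x → ¬ r m x then h.choose else a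
    have htopspec : ∀ T ∈ F', Q T (top T) ∧ ∀ x, Q T x → ¬ r (top T) x := by
      intro T hT
      have h := htopex T hT
      simp only [top, dif_pos h]
      exact h.choose_spec
    have htopQ : ∀ T ∈ F', Q T (top T) := fun T hT => (htopspec T hT).1
    have htopMax : ∀ T ∈ F', ∀ x, Q T x → ¬ r (top T) x := fun T hT => (htopspec T hT).2
    have htopS' : ∀ T ∈ F', top T ∈ T := fun T hT => (htopQ T hT).1
    have hbelow : ∀ T ∈ F', ∀ x, Q T x → x = top T ∨ r x (top T) := by
      intro T hT x hx
      by_cases hxe : x = top T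
      · exact Or.inl hxe
      · have hchn := (hF'chains _ hT).2
        rcases hchn x hx.1 (top T) (htopS' T hT) hxe with h | h
        · exact Or.inr h
        · exact absurd h (htopMax T hT x hx)
    have hkleS : k ≤ fwidth r S := by
      rw [hkdef, ← hA₀card]
      exact le_fwidth (hA₀S.trans hS'sub) hA₀anti
    by_cases hcase : ∃ T ∈ F', r (top T) a
    · -- case 1: a extends the chain below top T0
      obtain ⟨T0, hT0, hrta⟩ := hcase
      have hT0S : T0 ⊆ S' := (hF'chains _ hT0).1
      set K := insert a (T0.filter fun x => x = top T0 ∨ r x (top T0)) with hKdef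
      have haK : a ∈ K := Finset.mem_insert_self _ _
      have hKmem : ∀ x, x ∈ K ↔ (x = a ∨ (x ∈ T0 ∧ (x = top T0 ∨ r x (top T0)))) := by
        intro x
        simp [hKdef, Finset.mem_insert, Finset.mem_filter, and_comm]
      have hKS : K ⊆ S := by
        intro x hx
        rcases (hKmem x).mp hx with rfl | ⟨hxT, _⟩
        · exact haS
        · exact hS'sub (hT0S hxT)
      have hxa : ∀ x ∈ T0, (x = top T0 ∨ r x (top T0)) → r x a := by
        intro x _ hx
        rcases hx with rfl | hx
        · exact hrta
        · exact htr hx hrta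
      have hKchn : IsChn r K := by
        intro x hx y hy hne
        rcases (hKmem x).mp hx with rfl | ⟨hxT, hxtop⟩
        · rcases (hKmem y).mp hy with rfl | ⟨hyT, hytop⟩
          · exact absurd rfl hne
          · exact Or.inr (hxa y hyT hytop)
        · rcases (hKmem y).mp hy with rfl | ⟨hyT, hytop⟩
          · exact Or.inl (hxa x hxT hxtop)
          · exact (hF'chains _ hT0).2 x hxT y hyT hne
      have hk1 : 1 ≤ k := by
        rw [← hF'k]
        exact Finset.card_pos.mpr ⟨T0, hT0⟩
      have hwSK : fwidth r (S \ K) ≤ k - 1 := by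
        apply fwidth_le
        intro A hAS hAanti
        have hAS' : A ⊆ S' := by
          intro x hx
          have hxS := hAS hx
          rw [Finset.mem_sdiff] at hxS
          exact Finset.mem_erase.mpr ⟨fun h => hxS.2 (h ▸ haK), hxS.1⟩
        have hAk : A.card ≤ k := le_fwidth hAS' hAanti
        rcases eq_or_lt_of_le hAk with heq | hlt
        · exfalso
          obtain ⟨b, hbA, hbT⟩ := hmeets A hAS' hAanti heq T0 hT0
          have hQ : Q T0 b := ⟨hbT, A, hAS', hAanti, heq, hbA⟩
          have hbtop := hbelow T0 hT0 b hQ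
          have hbK : b ∈ K := (hKmem b).mpr (Or.inr ⟨hbT, hbtop⟩)
          have hbmem := hAS hbA
          rw [Finset.mem_sdiff] at hbmem
          exact hbmem.2 hbK
        · omega
      have hSKcard : (S \ K).card ≤ n := by
        have hsub : S \ K ⊆ S.erase a := by
          intro x hx
          rw [Finset.mem_sdiff] at hx
          exact Finset.mem_erase.mpr ⟨fun h => hx.2 (h ▸ haK), hx.1⟩
        calc (S \ K).card ≤ (S.erase a).card := Finset.card_le_card hsub
          _ ≤ n := hS'card
      obtain ⟨F'', hF''le, hF''chains, hF''disj, hF''cover⟩ := ih (S \ K) hSKcard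
      have hF''le' : F''.card ≤ k - 1 := hF''le.trans hwSK
      refine ⟨insert K F'', ?_, ?_, ?_, ?_⟩
      · calc (insert K F'').card ≤ F''.card + 1 := Finset.card_insert_le _ _
          _ ≤ k := by omega
          _ ≤ fwidth r S := hkleS
      · intro T hT
        rcases Finset.mem_insert.mp hT with rfl | hT
        · exact ⟨hKS, hKchn⟩
        · exact ⟨(hF''chains T hT).1.trans Finset.sdiff_subset, (hF''chains T hT).2⟩
      · intro T₁ hT₁ T₂ hT₂ hne
        have hdisjK : ∀ T ∈ F'', Disjoint K T := by
          intro T hT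
          rw [Finset.disjoint_right]
          intro x hxT hxK
          have hm := (hF''chains T hT).1 hxT
          rw [Finset.mem_sdiff] at hm
          exact hm.2 hxK
        rcases Finset.mem_insert.mp hT₁ with rfl | hT₁ <;>
          rcases Finset.mem_insert.mp hT₂ with rfl | hT₂
        · exact absurd rfl hne
        · exact hdisjK _ hT₂
        · exact (hdisjK _ hT₁).symm
        · exact hF''disj _ hT₁ _ hT₂ hne
      · intro v hv
        by_cases hvK : v ∈ K
        · exact ⟨K, Finset.mem_insert_self _ _, hvK⟩
        · obtain ⟨T, hT, hvT⟩ := hF''cover v (Finset.mem_sdiff.mpr ⟨hv, hvK⟩)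
          exact ⟨T, Finset.mem_insert_of_mem hT, hvT⟩
    · -- case 2: a is incomparable with all tops
      push_neg at hcase
      set Astar := insert a (F'.image top) with hAstardef
      have htopmemS' : ∀ T ∈ F', top T ∈ S' := fun T hT =>
        (hF'chains T hT).1 (htopS' T hT)
      have htopinj : ∀ T₁ ∈ F', ∀ T₂ ∈ F', top T₁ = top T₂ → T₁ = T₂ := by
        intro T₁ hT₁ T₂ hT₂ heq
        by_contra hne
        have hd := hF'disj T₁ hT₁ T₂ hT₂ hne
        exact (Finset.disjoint_left.mp hd (htopS' T₁ hT₁)) (heq ▸ htopS' T₂ hT₂)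
      have hanotin : a ∉ F'.image top := by
        intro h
        obtain ⟨T, hT, heq⟩ := Finset.mem_image.mp h
        exact haS'' (heq ▸ htopmemS' T hT)
      have hAstarAnti : AntiF r Astar := by
        intro x hx y hy hne hrxy
        rcases Finset.mem_insert.mp hx with rfl | hx
        · rcases Finset.mem_insert.mp hy with rfl | hy
          · exact hne rfl
          · obtain ⟨T, hT, rfl⟩ := Finset.mem_image.mp hy
            exact hamax (top T) (hS'sub (htopmemS' T hT)) hrxy
        · obtain ⟨T, hT, rfl⟩ := Finset.mem_image.mp hx
          rcases Finset.mem_insert.mp hy with rfl | hy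
          · exact hcase T hT hrxy
          · obtain ⟨T', hT', rfl⟩ := Finset.mem_image.mp hy
            obtain ⟨_, A1, hA1S, hA1anti, hA1card, htopA1⟩ := htopQ T' hT'
            obtain ⟨b, hbA1, hbT⟩ := hmeets A1 hA1S hA1anti hA1card T hT
            have hQb : Q T b := ⟨hbT, A1, hA1S, hA1anti, hA1card, hbA1⟩
            have hrbt' : r b (top T') := by
              rcases hbelow T hT b hQb with rfl | h
              · exact hrxy
              · exact htr h hrxy
            by_cases hbe : b = top T'
            · exact hirr _ (hbe ▸ hrbt')
            · exact hA1anti b hbA1 (top T') htopA1 hbe hrbt'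
      have hAstarS : Astar ⊆ S := by
        intro x hx
        rcases Finset.mem_insert.mp hx with rfl | hx
        · exact haS
        · obtain ⟨T, hT, rfl⟩ := Finset.mem_image.mp hx
          exact hS'sub (htopmemS' T hT)
      have hAstarcard : Astar.card = F'.card + 1 := by
        rw [hAstardef, Finset.card_insert_of_notMem hanotin,
          Finset.card_image_of_injOn (fun T₁ h₁ T₂ h₂ => htopinj T₁ h₁ T₂ h₂)]
      refine ⟨insert {a} F', ?_, ?_, ?_, ?_⟩
      · calc (insert {a} F').card ≤ F'.card + 1 := Finset.card_insert_le _ _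
          _ = Astar.card := hAstarcard.symm
          _ ≤ fwidth r S := le_fwidth hAstarS hAstarAnti
      · intro T hT
        rcases Finset.mem_insert.mp hT with rfl | hT
        · refine ⟨Finset.singleton_subset_iff.mpr haS, fun x hx y hy hne => ?_⟩
          rw [Finset.mem_singleton] at hx hy
          exact absurd (hx.trans hy.symm) hne
        · exact ⟨(hF'chains T hT).1.trans hS'sub, (hF'chains T hT).2⟩
      · intro T₁ hT₁ T₂ hT₂ hne
        have hdisja : ∀ T ∈ F', Disjoint {a} T := by
          intro T hT
          rw [Finset.disjoint_singleton_left]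
          intro h
          exact haS'' ((hF'chains T hT).1 h)
        rcases Finset.mem_insert.mp hT₁ with rfl | hT₁ <;>
          rcases Finset.mem_insert.mp hT₂ with rfl | hT₂
        · exact absurd rfl hne
        · exact hdisja _ hT₂
        · exact (hdisja _ hT₁).symm
        · exact hF'disj _ hT₁ _ hT₂ hne
      · intro v hv
        by_cases hva : v = a
        · exact ⟨{a}, Finset.mem_insert_self _ _, by simp [hva]⟩
        · obtain ⟨T, hT, hvT⟩ := hF'cover v (Finset.mem_erase.mpr ⟨hva, hv⟩)
          exact ⟨T, Finset.mem_insert_of_mem hT, hvT⟩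


lemma chain_toList (r : α → α → Prop) (htr : Transitive r) (hirr : Irreflexive r) :
    ∀ (T : Finset α), IsChn r T → ∃ l : List α, l.Pairwise r ∧ ∀ x, x ∈ l ↔ x ∈ T := by
  classical
  have wfr : WellFounded r := by
    haveI : IsTrans α r := ⟨fun a b c h1 h2 => htr h1 h2⟩
    haveI : IsIrrefl α r := ⟨hirr⟩
    exact Finite.wellFounded_of_trans_of_irrefl _
  intro T
  induction T using Finset.strongInductionOn with
  | _ T ih =>
    intro hchn
    rcases T.eq_empty_or_nonempty with rfl | hTne
    · exact ⟨[], by simp, by simp⟩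
    obtain ⟨m, hm', hmin'⟩ := wfr.has_min ↑T (by exact_mod_cast hTne)
    have hm : m ∈ T := hm'
    have hmin : ∀ x ∈ T, ¬ r x m := fun x hx h => hmin' x hx h
    have hsub : T.erase m ⊂ T := Finset.erase_ssubset hm
    obtain ⟨l', hl'pw, hl'mem⟩ := ih (T.erase m) hsub
      (fun x hx y hy hne => hchn x (Finset.mem_of_mem_erase hx) y (Finset.mem_of_mem_erase hy) hne)
    refine ⟨m :: l', ?_, ?_⟩
    · refine List.Pairwise.cons ?_ hl'pw
      intro x hx
      have hxT : x ∈ T.erase m := (hl'mem x).mp hx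
      have hxm : x ≠ m := Finset.ne_of_mem_erase hxT
      rcases hchn m hm x (Finset.mem_of_mem_erase hxT) (Ne.symm hxm) with h | h
      · exact h
      · exact absurd h (hmin x (Finset.mem_of_mem_erase hxT))
    · intro x
      simp only [List.mem_cons, hl'mem, Finset.mem_erase]
      constructor
      · rintro (rfl | ⟨_, h⟩)
        · exact hm
        · exact h
      · intro hx
        by_cases hxm : x = m
        · exact Or.inl hxm
        · exact Or.inr ⟨hxm, hx⟩


end Dilworth

section EFTfacts


variable [Fintype V] (E : V → V → Prop) (C : V → ℝ)

lemma nodup_lists_finite : ({l : List V | l.Nodup}).Finite := by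
  apply Set.Finite.subset (List.finite_length_le V (Fintype.card V))
  intro l hl
  exact hl.length_le_card

lemma dagLen_set_finite :
    {x : ℝ | ∃ l : List V, IsPath E l ∧ x = pathLen C l}.Finite := by
  apply Set.Finite.subset ((nodup_lists_finite (V := V)).image (pathLen C))
  rintro x ⟨l, hl, rfl⟩
  exact ⟨l, hl.2.1, rfl⟩

lemma EFT_set_finite (v : V) :
    {x : ℝ | ∃ l : List V, IsPath E l ∧ l.getLast? = some v ∧ x = pathLen C l}.Finite := by
  apply Set.Finite.subset ((nodup_lists_finite (V := V)).image (pathLen C))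
  rintro x ⟨l, hl, _, rfl⟩
  exact ⟨l, hl.2.1, rfl⟩

lemma EFT_set_nonempty (v : V) :
    {x : ℝ | ∃ l : List V, IsPath E l ∧ l.getLast? = some v ∧ x = pathLen C l}.Nonempty := by
  refine ⟨C v, [v], ⟨by simp, by simp, List.isChain_singleton v⟩, by simp, by simp [pathLen]⟩

/-- everything in a chain list is below its last element -/
lemma chain_last (E : V → V → Prop) :
    ∀ (l : List V), l.Chain' E → ∀ y, l.getLast? = some y →
      ∀ x ∈ l, x = y ∨ Relation.TransGen E x y := by
  intro l
  induction l with
  | nil => simp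
  | cons h t ih =>
    intro hc y hy x hx
    cases t with
    | nil =>
      simp only [List.getLast?_singleton, Option.some.injEq] at hy
      simp only [List.mem_singleton] at hx
      exact Or.inl (hx.trans hy)
    | cons b t' =>
      have hy' : (b :: t').getLast? = some y := by
        rw [List.getLast?_cons_cons] at hy
        exact hy
      have hEhb : E h b := (List.isChain_cons_cons.mp hc).1
      have hc' : (b :: t').Chain' E := (List.isChain_cons_cons.mp hc).2
      rcases List.mem_cons.mp hx with rfl | hx
      · rcases ih hc' y hy' b List.mem_cons_self with rfl | htg
        · exact Or.inr (Relation.TransGen.single hEhb)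
        · exact Or.inr (Relation.TransGen.head hEhb htg)
      · exact ih hc' y hy' x hx

lemma path_append {E : V → V → Prop} (hacyc : AcyclicRel E) {a b : V} (hE : E a b)
    {l : List V} (hl : IsPath E l) (hla : l.getLast? = some a) :
    IsPath E (l ++ [b]) ∧ (l ++ [b]).getLast? = some b ∧
      pathLen C (l ++ [b]) = pathLen C l + C b := by
  have hbl : b ∉ l := by
    intro hbmem
    rcases chain_last E l hl.2.2 a hla b hbmem with rfl | htg
    · exact hacyc b (Relation.TransGen.single hE)
    · exact hacyc b (Relation.TransGen.tail htg hE)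
  refine ⟨⟨by simp, ?_, ?_⟩, by simp, ?_⟩
  · rw [List.nodup_append]
    exact ⟨hl.2.1, List.nodup_singleton b, by simpa using fun a (ha : a ∈ l) (hab : a = b) => hbl (hab ▸ ha)⟩
  · show List.IsChain E (l ++ [b])
    rw [List.isChain_append]
    refine ⟨hl.2.2, List.isChain_singleton b, ?_⟩
    intro x hx y hy
    rw [hla, Option.mem_def, Option.some.injEq] at hx
    simp only [List.head?_cons, Option.mem_def, Option.some.injEq] at hy
    exact hx ▸ hy ▸ hE
  · simp [pathLen]

variable {E C}

lemma EFT_le_sub {a b : V} (hacyc : AcyclicRel E) (hE : E a b) :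
    EFT E C a + C b ≤ EFT E C b := by
  rw [← sub_nonneg]
  have h : EFT E C a ≤ EFT E C b - C b := by
    apply csSup_le (EFT_set_nonempty E C a)
    rintro x ⟨l, hl, hla, rfl⟩
    obtain ⟨hp, hlast, hlen⟩ := path_append C hacyc hE hl hla
    have hmem : pathLen C l + C b ∈
        {x : ℝ | ∃ l : List V, IsPath E l ∧ l.getLast? = some b ∧ x = pathLen C l} :=
      ⟨l ++ [b], hp, hlast, hlen.symm⟩
    have := le_csSup (EFT_set_finite E C b).bddAbove hmem
    rw [EFT]
    linarith
  linarith

lemma EFT_le_sub_tg {a b : V} (hacyc : AcyclicRel E) (hC : ∀ v, 0 ≤ C v)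
    (htg : Relation.TransGen E a b) :
    EFT E C a + C b ≤ EFT E C b := by
  induction htg with
  | single h => exact EFT_le_sub hacyc h
  | @tail m c _ hmc ih =>
    have h1 := EFT_le_sub hacyc hmc (C := C)
    have h2 := hC m
    linarith

lemma EFT_nonneg_ge (v : V) : C v ≤ EFT E C v :=
  le_csSup (EFT_set_finite E C v).bddAbove
    ⟨[v], ⟨by simp, by simp, List.isChain_singleton v⟩, by simp, by simp [pathLen]⟩

lemma EFT_le_dagLen {D : ℝ} (hL : dagLen E C ≤ D) (v : V) : EFT E C v ≤ D := by
  apply csSup_le (EFT_set_nonempty E C v)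
  rintro x ⟨l, hl, _, rfl⟩
  have : pathLen C l ≤ dagLen E C :=
    le_csSup (dagLen_set_finite E C).bddAbove ⟨l, hl, rfl⟩
  linarith


end EFTfacts

/-- a trivially schedulable DAG task admits a cover by M paths and
a feasible partitioned schedule meeting the deadline. -/
theorem stmt3 [Fintype V] [DecidableEq V] (E : V → V → Prop) (C : V → ℝ)
    (D : ℝ) (M : ℕ)
    (hacyc : AcyclicRel E) (hC : ∀ v, 0 ≤ C v)
    (hL : dagLen E C ≤ D) (hW : dagWidth E ≤ M) :
    ∃ P : Fin M → List V,
      (∀ k, (P k).Nodup ∧ (P k).Chain' (Relation.TransGen E)) ∧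
      (∀ v : V, ∃ k, v ∈ P k) ∧
      ∃ s : V → ℝ,
        (∀ v, 0 ≤ s v) ∧
        (∀ a b, E a b → s a + C a ≤ s b) ∧
        (∀ k, ∀ a ∈ P k, ∀ b ∈ P k, a ≠ b → s a + C a ≤ s b ∨ s b + C b ≤ s a) ∧
        (∀ v, s v + C v ≤ D) := by
  classical
  have htr : Transitive (Relation.TransGen E) := fun _ _ _ h1 h2 => h1.trans h2
  have hirr : Irreflexive (Relation.TransGen E) := hacyc
  -- antichain bound
  have hbound : ∀ A : Finset V, AntiF (Relation.TransGen E) A → A.card ≤ M := by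
    intro A hA
    have hbddW : BddAbove {k : ℕ | ∃ s : Finset V, IsAntichainIn E s ∧ s.card = k} :=
      ⟨Fintype.card V, fun _ ⟨s, _, hc⟩ => hc ▸ Finset.card_le_univ s⟩
    have : A.card ≤ dagWidth E := le_csSup hbddW ⟨A, hA, rfl⟩
    exact this.trans hW
  have hwidth : fwidth (Relation.TransGen E) Finset.univ ≤ M :=
    fwidth_le (fun A _ hA => hbound A hA)
  obtain ⟨F, hFcard, hFchains, hFdisj, hFcover⟩ :=
    dilworth_aux (Relation.TransGen E) htr hirr (Finset.univ.card (α := V))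
      Finset.univ le_rfl
  have hFM : F.card ≤ M := hFcard.trans hwidth
  -- turn chain sets into sorted lists
  let g : Finset V → List V := fun T =>
    if h : IsChn (Relation.TransGen E) T then
      (chain_toList (Relation.TransGen E) htr hirr T h).choose else []
  have hg : ∀ T, IsChn (Relation.TransGen E) T →
      (g T).Pairwise (Relation.TransGen E) ∧ ∀ x, x ∈ g T ↔ x ∈ T := by
    intro T h
    simp only [g, dif_pos h]
    exact (chain_toList (Relation.TransGen E) htr hirr T h).choose_spec
  set lst := F.toList with hlstdef
  have hlen : lst.length ≤ M := by
    rw [hlstdef, Finset.length_toList]; exact hFM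
  have hchnT : ∀ kf : Fin M, IsChn (Relation.TransGen E) (lst.getD kf.1 ∅) := by
    intro kf
    by_cases h : kf.1 < lst.length
    · rw [List.getD_eq_getElem lst ∅ h]
      have hmem : lst[kf.1] ∈ F := by
        rw [← Finset.mem_toList]
        exact List.getElem_mem h
      exact (hFchains _ hmem).2
    · rw [List.getD_eq_default lst ∅ (Nat.le_of_not_lt h)]
      intro a ha
      exact absurd ha (Finset.notMem_empty a)
  set P : Fin M → List V := fun kf => g (lst.getD kf.1 ∅) with hPdef
  have hPpw : ∀ kf, (P kf).Pairwise (Relation.TransGen E) := fun kf =>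
    (hg _ (hchnT kf)).1
  refine ⟨P, ?_, ?_, ?_⟩
  · intro kf
    have hpw := hPpw kf
    have hne : ∀ a b : V, Relation.TransGen E a b → a ≠ b :=
      fun _ b h he => hirr b (he ▸ h)
    exact ⟨List.Pairwise.imp (fun {a b} h => hne a b h) hpw, hpw.isChain⟩
  · intro v
    obtain ⟨T, hT, hvT⟩ := hFcover v (Finset.mem_univ v)
    have hTin : T ∈ lst := Finset.mem_toList.mpr hT
    obtain ⟨i, hi⟩ := List.mem_iff_get.mp hTin
    refine ⟨⟨i.1, lt_of_lt_of_le i.2 hlen⟩, ?_⟩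
    have hgetD : lst.getD i.1 ∅ = T := by
      rw [List.getD_eq_getElem lst ∅ i.2, ← hi]
      rfl
    have : P ⟨i.1, lt_of_lt_of_le i.2 hlen⟩ = g T := by
      rw [hPdef]
      simp only []
      rw [hgetD]
    rw [this]
    exact ((hg T (hgetD ▸ hchnT ⟨i.1, lt_of_lt_of_le i.2 hlen⟩)).2 v).mpr hvT
  · refine ⟨fun v => EFT E C v - C v, ?_, ?_, ?_, ?_⟩
      <;> dsimp only
    · intro v
      have := EFT_nonneg_ge (E := E) (C := C) v
      linarith
    · intro a b hE
      have := EFT_le_sub (C := C) hacyc hE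
      linarith
    · intro kf a ha b hb hne
      have hpw := hPpw kf
      have hsym : Symmetric (fun x y =>
          Relation.TransGen E x y ∨ Relation.TransGen E y x) :=
        fun _ _ h => h.symm
      haveI : Std.Symm (fun x y =>
          Relation.TransGen E x y ∨ Relation.TransGen E y x) := ⟨fun _ _ h => hsym h⟩
      have hcomp := (hpw.imp (S := fun x y =>
          Relation.TransGen E x y ∨ Relation.TransGen E y x) fun h => Or.inl h).forall ha hb hne
      rcases hcomp with h | h
      · left
        have := EFT_le_sub_tg hacyc hC h
        linarith
      · right
        have := EFT_le_sub_tg hacyc hC h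
        linarith
    · intro v
      have := EFT_le_dagLen hL v
      linarith

end EGS
end

section
/- A DAG task (G, D) is schedulable on M identical processors if and only if there exists a DAG G' on the same node set, whose edge set (in transitive closure) contains that of G, such that L(G') ≤ D and W(G') ≤ M. -/
namespace EGS

variable {V : Type*}

theorem pathLen_cons (C : V → ℝ) (x : V) (l : List V) :
    pathLen C (x :: l) = C x + pathLen C l := by simp [pathLen]
theorem chain'_head_last {r : V → V → Prop} :
    ∀ (l : List V) (a b : V), l.Chain' r → l.head? = some a → l.getLast? = some b →
      a = b ∨ Relation.TransGen r a b := by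
  intro l
  induction l with
  | nil => simp
  | cons x t ih =>
    intro a b hch ha hb
    cases t with
    | nil =>
      simp at ha hb
      left; rw [← ha, ← hb]
    | cons y t' =>
      rw [List.Chain', List.isChain_cons_cons] at hch
      have hax : a = x := by simpa using ha.symm
      have hb' : (y :: t').getLast? = some b := by simpa using hb
      subst hax
      rcases ih y b hch.2 (by simp) hb' with h | h
      · right; exact Relation.TransGen.single (h ▸ hch.1)
      · right; exact (Relation.TransGen.single hch.1).trans h

theorem chain'_mem_last {r : V → V → Prop} :
    ∀ (l : List V) (b a : V), l.Chain' r → b ∈ l → l.getLast? = some a →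
      b = a ∨ Relation.TransGen r b a := by
  intro l
  induction l with
  | nil => simp
  | cons x t ih =>
    intro b a hch hb ha
    rcases List.mem_cons.mp hb with rfl | hb'
    · exact chain'_head_last (b :: t) b a hch (by simp) ha
    · cases t with
      | nil => simp at hb'
      | cons y t' =>
        exact ih b a (List.isChain_cons_cons.mp hch).2 hb' (by simpa using ha)

theorem bdd_pathSet [Fintype V] (C : V → ℝ) (T : Set ℝ)
    (hT : ∀ x ∈ T, ∃ l : List V, l.Nodup ∧ x = pathLen C l) : BddAbove T := by
  classical
  have h1 : {l : List V | l.Nodup}.Finite := by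
    apply (List.finite_length_le V (Fintype.card V)).subset
    intro l hl
    exact List.Nodup.length_le_card hl
  have h2 : T ⊆ pathLen C '' {l | l.Nodup} := by
    rintro x hx
    obtain ⟨l, h, e⟩ := hT x hx
    exact ⟨l, h, e.symm⟩
  exact ((h1.image _).subset h2).bddAbove

theorem chain'_pathLen_le {r : V → V → Prop} {s C : V → ℝ}
    (hr : ∀ a b, r a b → s a + C a ≤ s b) :
    ∀ (l : List V) (a b : V), l.Chain' r → l.head? = some a → l.getLast? = some b →
      s a + pathLen C l ≤ s b + C b := by
  intro l
  induction l with
  | nil => simp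
  | cons x t ih =>
    intro a b hch ha hb
    cases t with
    | nil =>
      simp at ha hb
      rw [← ha, ← hb, pathLen_cons]
      simp [pathLen]
    | cons y t' =>
      rw [List.Chain', List.isChain_cons_cons] at hch
      have hax : a = x := by simpa using ha.symm
      subst hax
      have hb' : (y :: t').getLast? = some b := by simpa using hb
      have h1 := ih y b hch.2 (by simp) hb'
      have h2 := hr a y hch.1
      rw [pathLen_cons]
      linarith

theorem stmt4_fwd [Fintype V] [DecidableEq V] (E : V → V → Prop) (C : V → ℝ)
    (D : ℝ) (M : ℕ)
    (hacyc : AcyclicRel E) (hC : ∀ v, 0 ≤ C v) (hD : 0 ≤ D)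
    (h : ∃ (s : V → ℝ) (p : V → Fin M),
        (∀ v, 0 ≤ s v) ∧
        (∀ a b, E a b → s a + C a ≤ s b) ∧
        (∀ a b, a ≠ b → p a = p b → s a + C a ≤ s b ∨ s b + C b ≤ s a) ∧
        (∀ v, s v + C v ≤ D)) :
    (∃ E' : V → V → Prop,
        AcyclicRel E' ∧
        (∀ a b, Relation.TransGen E a b → Relation.TransGen E' a b) ∧
        dagLen E' C ≤ D ∧ dagWidth E' ≤ M) := by
  classical
  obtain ⟨s, p, hs0, hsE, hsp, hsD⟩ := h
  set n := Fintype.card V with hn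
  set idx : V → ℕ := fun v => ((Fintype.equivFin V) v : ℕ) with hidx
  set anc : V → Finset V := fun v => Finset.univ.filter (fun u => Relation.TransGen E u v)
    with hanc
  set f : V → ℕ := fun v => idx v + (anc v).card * (n + 1) with hf
  have hidxlt : ∀ v, idx v < n + 1 := fun v => Nat.lt_succ_of_lt ((Fintype.equivFin V) v).isLt
  have hfmono : ∀ a b, Relation.TransGen E a b → f a < f b := by
    intro a b h
    have hsub : anc a ⊆ anc b := by
      intro u hu
      simp only [hanc, Finset.mem_filter, Finset.mem_univ, true_and] at hu ⊢
      exact hu.trans h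
    have hab : a ∈ anc b := by
      simp only [hanc, Finset.mem_filter, Finset.mem_univ, true_and]; exact h
    have hana : a ∉ anc a := by
      simp only [hanc, Finset.mem_filter, Finset.mem_univ, true_and]; exact hacyc a
    have hlt : (anc a).card < (anc b).card :=
      Finset.card_lt_card ⟨hsub, fun hsub' => hana (hsub' hab)⟩
    have h1 := hidxlt a
    simp only [hf]
    nlinarith
  have hfinj : Function.Injective f := by
    intro a b hab
    have h1 : f a % (n + 1) = idx a := by
      simp only [hf, Nat.add_mul_mod_self_right]
      exact Nat.mod_eq_of_lt (hidxlt a)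
    have h2 : f b % (n + 1) = idx b := by
      simp only [hf, Nat.add_mul_mod_self_right]
      exact Nat.mod_eq_of_lt (hidxlt b)
    have : idx a = idx b := by rw [← h1, ← h2, hab]
    exact (Fintype.equivFin V).injective (Fin.val_injective this)
  set E' : V → V → Prop := fun a b =>
    Relation.TransGen E a b ∨ (s a + C a ≤ s b ∧ (s a < s b + C b ∨ f a < f b)) with hE'
  have htg : ∀ a b, Relation.TransGen E a b → s a + C a ≤ s b := by
    intro a b h
    induction h with
    | single h => exact hsE _ _ h
    | @tail x y h1 h2 ih =>
      have h3 := hsE x y h2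
      have h4 := hC x
      linarith
  have hedge : ∀ a b, E' a b → s a + C a ≤ s b := by
    intro a b h
    rcases h with h | ⟨h, _⟩
    · exact htg a b h
    · exact h
  -- the lexicographic measure
  set pos : V → ℕ := fun v => if 0 < C v then 1 else 0 with hpos
  set mlt : V → V → Prop := fun a b =>
    s a < s b ∨ (s a = s b ∧ (pos a < pos b ∨ (pos a = pos b ∧ f a < f b))) with hmlt
  have hm : ∀ a b, E' a b → mlt a b := by
    intro a b h
    have hsle : s a + C a ≤ s b := hedge a b h
    have hab : s a ≤ s b := by linarith [hC a]
    rcases lt_or_eq_of_le hab with hlt | heq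
    · exact Or.inl hlt
    · right
      refine ⟨heq, ?_⟩
      have hCa : C a = 0 := by linarith [hC a]
      have hpa : pos a = 0 := by simp [hpos, hCa]
      by_cases hb : 0 < C b
      · left
        have hpb : pos b = 1 := by simp [hpos, hb]
        omega
      · have hpb : pos b = 0 := by simp [hpos, hb]
        right
        refine ⟨by rw [hpa, hpb], ?_⟩
        rcases h with h | ⟨_, h2⟩
        · exact hfmono a b h
        · rcases h2 with h2 | h2
          · exfalso
            have hCb : C b = 0 := by linarith [hC b]
            rw [heq, hCb] at h2; linarith
          · exact h2
  have hmtrans : ∀ a b c, mlt a b → mlt b c → mlt a c := by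
    intro a b c h1 h2
    rcases h1 with h1 | ⟨e1, h1⟩ <;> rcases h2 with h2 | ⟨e2, h2⟩
    · exact Or.inl (h1.trans h2)
    · exact Or.inl (e2 ▸ h1)
    · exact Or.inl (e1 ▸ h2)
    · exact Or.inr ⟨e1.trans e2, by omega⟩
  have hmirr : ∀ v, ¬ mlt v v := by
    intro v h
    rcases h with h | ⟨_, h⟩
    · exact lt_irrefl _ h
    · omega
  have htgm : ∀ a b, Relation.TransGen E' a b → mlt a b := by
    intro a b h
    induction h with
    | single h => exact hm _ _ h
    | tail h1 h2 ih => exact hmtrans _ _ _ ih (hm _ _ h2)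
  refine ⟨E', fun v hv => hmirr v (htgm v v hv),
    fun a b h => Relation.TransGen.single (Or.inl h), ?_, ?_⟩
  · -- dagLen
    apply Real.sSup_le _ hD
    rintro x ⟨l, ⟨hne, hnd, hch⟩, rfl⟩
    have ha : l.head? = some (l.head hne) := List.head?_eq_head hne
    have hb : l.getLast? = some (l.getLast hne) := List.getLast?_eq_getLast hne
    have := chain'_pathLen_le hedge l _ _ hch ha hb
    have := hs0 (l.head hne)
    have := hsD (l.getLast hne)
    linarith
  · -- dagWidth
    have hne0 : (0:ℕ) ∈ {k : ℕ | ∃ s : Finset V, IsAntichainIn E' s ∧ s.card = k} :=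
      ⟨∅, by simp [IsAntichainIn], by simp⟩
    apply csSup_le ⟨0, hne0⟩
    rintro k ⟨A, hA, rfl⟩
    have key : ∀ x y, x ≠ y → ¬ E' x y → ¬ E' y x → ¬ (s x + C x ≤ s y) := by
      intro x y hxy hnxy hnyx hle
      have h1 : ¬ (s x < s y + C y ∨ f x < f y) := by
        intro h; exact hnxy (Or.inr ⟨hle, h⟩)
      push_neg at h1
      have hfyx : f y < f x := lt_of_le_of_ne h1.2 (fun e => hxy (hfinj e).symm)
      exact hnyx (Or.inr ⟨h1.1, Or.inr hfyx⟩)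
    have hinj : Set.InjOn p ↑A := by
      intro a ha b hb hpe
      by_contra hab
      have hnab : ¬ E' a b := fun h => hA a ha b hb hab (Relation.TransGen.single h)
      have hnba : ¬ E' b a := fun h => hA b hb a ha (Ne.symm hab) (Relation.TransGen.single h)
      rcases hsp a b hab hpe with h | h
      · exact key a b hab hnab hnba h
      · exact key b a (Ne.symm hab) hnba hnab h
    calc A.card ≤ (Finset.univ : Finset (Fin M)).card :=
          Finset.card_le_card_of_injOn p (fun _ _ => Finset.mem_univ _) hinj
      _ = M := by simp


theorem stmt4_bwd [Fintype V] [DecidableEq V] (E : V → V → Prop) (C : V → ℝ)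
    (D : ℝ) (M : ℕ)
    (hacyc : AcyclicRel E) (hC : ∀ v, 0 ≤ C v) (hD : 0 ≤ D)
    (h : ∃ E' : V → V → Prop,
        AcyclicRel E' ∧
        (∀ a b, Relation.TransGen E a b → Relation.TransGen E' a b) ∧
        dagLen E' C ≤ D ∧ dagWidth E' ≤ M) :
    (∃ (s : V → ℝ) (p : V → Fin M),
        (∀ v, 0 ≤ s v) ∧
        (∀ a b, E a b → s a + C a ≤ s b) ∧
        (∀ a b, a ≠ b → p a = p b → s a + C a ≤ s b ∨ s b + C b ≤ s a) ∧
        (∀ v, s v + C v ≤ D)) := by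
  classical
  obtain ⟨E', hacyc', hsub, hlen, hwidth⟩ := h
  by_cases hV : IsEmpty V
  · exact ⟨fun _ => 0, fun v => (hV.elim v), fun v => (hV.elim v),
      fun a _ _ => (hV.elim a), fun a _ _ _ => (hV.elim a), fun v => (hV.elim v)⟩
  have hVne : Nonempty V := not_isEmpty_iff.mp hV
  obtain ⟨v₀⟩ := hVne
  have hbddW : BddAbove {k : ℕ | ∃ s : Finset V, IsAntichainIn E' s ∧ s.card = k} := by
    refine ⟨Fintype.card V, ?_⟩
    rintro k ⟨A, _, rfl⟩
    exact Finset.card_le_univ A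
  have hM1 : 1 ≤ M := by
    have h1 : (1:ℕ) ∈ {k : ℕ | ∃ s : Finset V, IsAntichainIn E' s ∧ s.card = k} := by
      refine ⟨{v₀}, ?_, by simp⟩
      intro a ha b hb hab
      simp at ha hb
      exact absurd (ha.trans hb.symm) hab
    exact le_trans (le_csSup hbddW h1) hwidth
  -- start times
  set S : V → Set ℝ :=
    fun v => {x : ℝ | ∃ l : List V, IsPath E' l ∧ l.getLast? = some v ∧ x = pathLen C l}
    with hS
  have hbddS : ∀ v, BddAbove (S v) := by
    intro v
    apply bdd_pathSet (C := C)
    rintro x ⟨l, ⟨_, hnd, _⟩, _, rfl⟩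
    exact ⟨l, hnd, rfl⟩
  have hmemS : ∀ v, C v ∈ S v := by
    intro v
    exact ⟨[v], ⟨by simp, by simp, List.isChain_singleton _⟩, by simp, by simp [pathLen]⟩
  set s : V → ℝ := fun v => sSup (S v) - C v with hs
  have hs0 : ∀ v, 0 ≤ s v := by
    intro v
    have := le_csSup (hbddS v) (hmemS v)
    simp only [hs]
    linarith
  have hbddLen : BddAbove {x : ℝ | ∃ l : List V, IsPath E' l ∧ x = pathLen C l} := by
    apply bdd_pathSet (C := C)
    rintro x ⟨l, ⟨_, hnd, _⟩, rfl⟩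
    exact ⟨l, hnd, rfl⟩
  have hsD : ∀ v, s v + C v ≤ D := by
    intro v
    have h1 : sSup (S v) ≤ D := by
      apply csSup_le ⟨C v, hmemS v⟩
      rintro x ⟨l, hl, _, rfl⟩
      exact le_trans (le_csSup hbddLen ⟨l, hl, rfl⟩) hlen
    simp only [hs]
    linarith
  -- edge inequality
  have hstep : ∀ a b, E' a b → s a + C a ≤ s b := by
    intro a b hab
    have key : sSup (S a) + C b ≤ sSup (S b) := by
      have h2 : ∀ x ∈ S a, x ≤ sSup (S b) - C b := by
        rintro x ⟨l, ⟨hne, hnd, hch⟩, hlast, rfl⟩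
        have hbl : b ∉ l := by
          intro hbmem
          rcases chain'_mem_last l b a hch hbmem hlast with rfl | htr
          · exact hacyc' b (Relation.TransGen.single hab)
          · exact hacyc' b (htr.tail hab)
        have hmem : pathLen C l + C b ∈ S b := by
          refine ⟨l ++ [b], ⟨by simp [hne], ?_, ?_⟩, ?_, by simp [pathLen]⟩
          · simp [List.nodup_append, hnd, hbl]; rintro x hx rfl; exact hbl hx
          · rw [List.Chain', List.isChain_append]
            refine ⟨hch, by simp, ?_⟩
            intro x hx y hy
            simp at hy
            rw [hlast] at hx
            simp at hx
            rw [← hx, ← hy]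
            exact hab
          · simp
        have := le_csSup (hbddS b) hmem
        linarith
      have := csSup_le ⟨C a, hmemS a⟩ h2
      linarith
    simp only [hs]
    linarith
  have htrans' : ∀ a b, Relation.TransGen E' a b → s a + C a ≤ s b := by
    intro a b h
    induction h with
    | single h => exact hstep _ _ h
    | @tail x y h1 h2 ih =>
      have h3 := hstep x y h2
      have h4 := hC x
      linarith
  -- clique bound from width
  have hclique : ∀ B : Finset V,
      (∀ a ∈ B, ∀ b ∈ B, a ≠ b → s a < s b + C b) → B.card ≤ M := by
    intro B hB
    have hanti : IsAntichainIn E' B := by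
      intro a ha b hb hab htr
      have h1 := htrans' a b htr
      have h2 := hB b hb a ha (Ne.symm hab)
      linarith
    exact le_trans (le_csSup hbddW ⟨B, hanti, rfl⟩) hwidth
  -- processor assignment by greedy induction
  have exists_p : ∀ A : Finset V, ∃ p : V → Fin M,
      ∀ a ∈ A, ∀ b ∈ A, a ≠ b → p a = p b → s a + C a ≤ s b ∨ s b + C b ≤ s a := by
    intro A
    induction A using Finset.strongInductionOn with
    | _ A ih =>
      rcases Finset.eq_empty_or_nonempty A with rfl | hAne
      · exact ⟨fun _ => ⟨0, by omega⟩, by simp⟩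
      obtain ⟨v, hv, hmax⟩ := A.exists_max_image s hAne
      obtain ⟨p', hp'⟩ := ih (A.erase v) (Finset.erase_ssubset hv)
      set B : Finset V := (A.erase v).filter
        (fun u => ¬ (s u + C u ≤ s v) ∧ ¬ (s v + C v ≤ s u)) with hB
      have hvB : v ∉ B := fun h => (Finset.mem_erase.mp (Finset.mem_filter.mp h).1).1 rfl
      have hcard : B.card < M := by
        have h1 : (insert v B).card ≤ M := by
          apply hclique
          intro a ha b hb hab
          rcases Finset.mem_insert.mp ha with rfl | ha' <;>
            rcases Finset.mem_insert.mp hb with h | hb'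
          · exact absurd h.symm hab
          · have := (Finset.mem_filter.mp hb').2.1
            linarith
          · subst h
            have := (Finset.mem_filter.mp ha').2.2
            linarith
          · have h2 : s a ≤ s v :=
              hmax a (Finset.mem_of_mem_erase (Finset.mem_filter.mp ha').1)
            have h3 := (Finset.mem_filter.mp hb').2.1
            linarith
        rw [Finset.card_insert_of_notMem hvB] at h1
        omega
      have hfree : ∃ c : Fin M, ∀ u ∈ B, p' u ≠ c := by
        by_contra hcon
        push_neg at hcon
        have hsubset : (Finset.univ : Finset (Fin M)) ⊆ B.image p' := by
          intro c _
          obtain ⟨u, hu, e⟩ := hcon c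
          exact Finset.mem_image.mpr ⟨u, hu, e⟩
        have h4 := Finset.card_le_card hsubset
        have h5 := Finset.card_image_le (f := p') (s := B)
        rw [Finset.card_univ, Fintype.card_fin] at h4
        omega
      obtain ⟨c, hc⟩ := hfree
      refine ⟨Function.update p' v c, ?_⟩
      intro a ha b hb hab hpe
      by_cases ha' : a = v
      · by_cases hb' : b = v
        · exact absurd (ha'.trans hb'.symm) hab
        have hpb : Function.update p' v c b = p' b := Function.update_of_ne hb' _ _
        have hpa : Function.update p' v c a = c := by rw [ha']; exact Function.update_self _ _ _
        rw [hpa, hpb] at hpe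
        have hbB : b ∉ B := fun h => hc b h hpe.symm
        have hbe : b ∈ A.erase v := Finset.mem_erase.mpr ⟨hb', hb⟩
        have hthis : ¬ (¬ (s b + C b ≤ s v) ∧ ¬ (s v + C v ≤ s b)) := by
          intro hcontra
          exact hbB (Finset.mem_filter.mpr ⟨hbe, hcontra⟩)
        push_neg at hthis
        rw [ha']
        by_cases h1 : s b + C b ≤ s v
        · exact Or.inr h1
        · exact Or.inl (hthis (not_le.mp h1))
      · by_cases hb' : b = v
        · have hpa : Function.update p' v c a = p' a := Function.update_of_ne ha' _ _
          have hpb : Function.update p' v c b = c := by rw [hb']; exact Function.update_self _ _ _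
          rw [hpa, hpb] at hpe
          have haB : a ∉ B := fun h => hc a h hpe
          have hae : a ∈ A.erase v := Finset.mem_erase.mpr ⟨ha', ha⟩
          have hthis : ¬ (¬ (s a + C a ≤ s v) ∧ ¬ (s v + C v ≤ s a)) := by
            intro hcontra
            exact haB (Finset.mem_filter.mpr ⟨hae, hcontra⟩)
          push_neg at hthis
          rw [hb']
          by_cases h1 : s a + C a ≤ s v
          · exact Or.inl h1
          · exact Or.inr (hthis (not_le.mp h1))
        · have hpa : Function.update p' v c a = p' a := Function.update_of_ne ha' _ _
          have hpb : Function.update p' v c b = p' b := Function.update_of_ne hb' _ _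
          rw [hpa, hpb] at hpe
          exact hp' a (Finset.mem_erase.mpr ⟨ha', ha⟩) b (Finset.mem_erase.mpr ⟨hb', hb⟩)
            hab hpe
  obtain ⟨p, hp⟩ := exists_p Finset.univ
  exact ⟨s, p, hs0,
    fun a b hab => htrans' a b (hsub a b (Relation.TransGen.single hab)),
    fun a b hab hpe => hp a (Finset.mem_univ a) b (Finset.mem_univ b) hab hpe,
    hsD⟩


/-- schedulability on M processors is equivalent to the existence
of a super-DAG (in the transitive-closure sense) with length at most D and
width at most M. -/
theorem stmt4 [Fintype V] [DecidableEq V] (E : V → V → Prop) (C : V → ℝ)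
    (D : ℝ) (M : ℕ)
    (hacyc : AcyclicRel E) (hC : ∀ v, 0 ≤ C v) (hD : 0 ≤ D) :
    (∃ (s : V → ℝ) (p : V → Fin M),
        (∀ v, 0 ≤ s v) ∧
        (∀ a b, E a b → s a + C a ≤ s b) ∧
        (∀ a b, a ≠ b → p a = p b → s a + C a ≤ s b ∨ s b + C b ≤ s a) ∧
        (∀ v, s v + C v ≤ D))
    ↔ (∃ E' : V → V → Prop,
        AcyclicRel E' ∧
        (∀ a b, Relation.TransGen E a b → Relation.TransGen E' a b) ∧
        dagLen E' C ≤ D ∧ dagWidth E' ≤ M) :=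
  ⟨stmt4_fwd E C D M hacyc hC hD, stmt4_bwd E C D M hacyc hC hD⟩

end EGS
end

section
/- Let (G, D) be a DAG task with L(G) ≤ D, and let e_ij be a candidate edge with v_j not a descendant of v_i and v_j not an ancestor of v_i and v_j ≠ v_i. Then the graph G' = (V, E ∪ {e_ij}) satisfies L(G') ≤ D if and only if EFT(v_i) ≤ LST(v_j) in (G, D), where EFT(v_i) is the length of the longest path from the source ending at v_i (including C_i) and LST(v_j) = D minus the length of the longest path from v_j to the sink (including C_j). -/
namespace EGS

variable {V : Type*}

/-! ### Auxiliary lemmas -/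

lemma bddAbove_pl [Fintype V] (C : V → ℝ) (S : Set ℝ)
    (h : ∀ x ∈ S, ∃ l : List V, l.Nodup ∧ x = pathLen C l) : BddAbove S := by
  have hfin : S.Finite := by
    apply Set.Finite.subset ((List.finite_length_le V (Fintype.card V)).image (pathLen C))
    intro x hx
    obtain ⟨l, hl, rfl⟩ := h x hx
    exact ⟨l, hl.length_le_card, rfl⟩
  exact hfin.bddAbove

lemma pathLen_nonneg (C : V → ℝ) (hC : ∀ v, 0 ≤ C v) (l : List V) :
    0 ≤ pathLen C l := by
  apply List.sum_nonneg
  intro x hx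
  obtain ⟨v, _, rfl⟩ := List.mem_map.mp hx
  exact hC v

lemma pathLen_append (C : V → ℝ) (l1 l2 : List V) :
    pathLen C (l1 ++ l2) = pathLen C l1 + pathLen C l2 := by
  simp [pathLen]

lemma chain'_reach_last {E : V → V → Prop} :
    ∀ (l : List V), l.Chain' E → ∀ v ∈ l, ∀ w, l.getLast? = some w →
      Relation.ReflTransGen E v w
  | [], _, v, hv, _, _ => by simp at hv
  | [a], _, v, hv, w, hw => by
      simp at hv hw; subst hv; subst hw; exact Relation.ReflTransGen.refl
  | a :: b :: t, h, v, hv, w, hw => by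
      rw [List.Chain', List.isChain_cons_cons] at h
      have hw' : (b :: t).getLast? = some w := by
        rw [List.getLast?_cons_cons] at hw; exact hw
      rcases List.mem_cons.mp hv with rfl | hv'
      · exact Relation.ReflTransGen.head h.1
          (chain'_reach_last (b :: t) h.2 b (List.mem_cons_self (a := b) (l := t)) w hw')
      · exact chain'_reach_last (b :: t) h.2 v hv' w hw'

lemma chain'_reach_head {E : V → V → Prop} :
    ∀ (l : List V), l.Chain' E → ∀ w, l.head? = some w → ∀ v ∈ l,
      Relation.ReflTransGen E w v
  | [], _, w, hw, _, _ => by simp at hw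
  | a :: t, h, w, hw, v, hv => by
      simp at hw; subst hw
      rcases List.mem_cons.mp hv with rfl | hv'
      · exact Relation.ReflTransGen.refl
      · cases t with
        | nil => simp at hv'
        | cons b t' =>
            rw [List.Chain', List.isChain_cons_cons] at h
            exact Relation.ReflTransGen.head h.1
              (chain'_reach_head (b :: t') h.2 b rfl v hv')

lemma split_lemma {E : V → V → Prop} {i j : V} :
    ∀ (l : List V), l.Nodup → l.Chain' (fun a b => E a b ∨ (a = i ∧ b = j)) →
      l.Chain' E ∨ ∃ l1 l2, l = l1 ++ l2 ∧ l1.getLast? = some i ∧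
        l2.head? = some j ∧ l1.Chain' E ∧ l2.Chain' E
  | [], _, _ => Or.inl List.isChain_nil
  | [a], _, _ => Or.inl (List.isChain_singleton a)
  | a :: b :: t, hnd, hch => by
      rw [List.Chain', List.isChain_cons_cons] at hch
      have hnd' : (b :: t).Nodup := hnd.of_cons
      have IH := split_lemma (b :: t) hnd' hch.2
      by_cases hab : E a b
      · rcases IH with hchE | ⟨l1, l2, heq, hlast, hhead, hc1, hc2⟩
        · exact Or.inl (List.isChain_cons_cons.mpr ⟨hab, hchE⟩)
        · right
          cases l1 with
          | nil => simp at hlast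
          | cons c t1 =>
              have hcb : c = b ∧ t1 ++ l2 = t := by
                rw [List.cons_append] at heq
                exact ⟨((List.cons.injEq _ _ _ _ ▸ heq).1).symm,
                  ((List.cons.injEq _ _ _ _ ▸ heq).2).symm⟩
              refine ⟨a :: c :: t1, l2, ?_, ?_, hhead, ?_, hc2⟩
              · rw [List.cons_append, heq]
              · rw [List.getLast?_cons_cons]; exact hlast
              · exact List.isChain_cons_cons.mpr ⟨hcb.1 ▸ hab, hc1⟩
      · -- the step a → b must be the new edge: a = i, b = j
        rcases hch.1 with h' | ⟨rfl, rfl⟩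
        · exact absurd h' hab
        · right
          refine ⟨[a], b :: t, rfl, rfl, rfl, List.isChain_singleton a, ?_⟩
          rcases IH with hchE | ⟨l1, l2, heq, hlast, hhead, _, _⟩
          · exact hchE
          · exfalso
            cases l1 with
            | nil => simp at hlast
            | cons c t1 =>
                have hcb : c = b := by
                  rw [List.cons_append] at heq
                  exact ((List.cons.injEq _ _ _ _ ▸ heq).1).symm
                have hjl2 : b ∈ l2 := by
                  cases l2 with
                  | nil => simp at hhead
                  | cons d t2 =>
                      simp at hhead
                      exact hhead ▸ List.mem_cons_self (a := d) (l := t2)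
                have hdisj := (List.nodup_append'.mp (heq ▸ hnd')).2.2
                exact hdisj (hcb ▸ List.mem_cons_self (a := c) (l := t1)) hjl2

/-- length mask: adding a non-redundant, non-cycle-creating edge
e_ij keeps the DAG length within the deadline iff EFT(v_i) ≤ LST(v_j). -/
theorem stmt6 [Fintype V] [DecidableEq V] (E : V → V → Prop) (C : V → ℝ)
    (D : ℝ) (i j : V)
    (hacyc : AcyclicRel E) (hC : ∀ v, 0 ≤ C v)
    (hL : dagLen E C ≤ D)
    (hred : ¬ Relation.TransGen E i j)
    (hcyc : ¬ Relation.TransGen E j i)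
    (hne : i ≠ j) :
    dagLen (fun a b => E a b ∨ (a = i ∧ b = j)) C ≤ D ↔ EFT E C i ≤ LST E C D j := by
  set E' : V → V → Prop := fun a b => E a b ∨ (a = i ∧ b = j) with hE'
  -- basic bounded-above facts
  have bddDag : BddAbove {x : ℝ | ∃ l : List V, IsPath E l ∧ x = pathLen C l} :=
    bddAbove_pl C _ (by rintro x ⟨l, hl, rfl⟩; exact ⟨l, hl.2.1, rfl⟩)
  have bddDag' : BddAbove {x : ℝ | ∃ l : List V, IsPath E' l ∧ x = pathLen C l} :=
    bddAbove_pl C _ (by rintro x ⟨l, hl, rfl⟩; exact ⟨l, hl.2.1, rfl⟩)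
  have bddEFT : BddAbove {x : ℝ | ∃ l : List V, IsPath E l ∧ l.getLast? = some i ∧
      x = pathLen C l} :=
    bddAbove_pl C _ (by rintro x ⟨l, hl, _, rfl⟩; exact ⟨l, hl.2.1, rfl⟩)
  have bddT : BddAbove {x : ℝ | ∃ l : List V, IsPath E l ∧ l.head? = some j ∧
      x = pathLen C l} :=
    bddAbove_pl C _ (by rintro x ⟨l, hl, _, rfl⟩; exact ⟨l, hl.2.1, rfl⟩)
  set T : ℝ := sSup {x : ℝ | ∃ l : List V, IsPath E l ∧ l.head? = some j ∧
      x = pathLen C l} with hT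
  -- every E-path has length ≤ D
  have hmemD : ∀ l : List V, IsPath E l → pathLen C l ≤ D := by
    intro l hl
    exact le_trans (le_csSup bddDag ⟨l, hl, rfl⟩) hL
  have hDnn : 0 ≤ D := by
    have hp : IsPath E [i] := ⟨List.cons_ne_nil _ _, List.nodup_singleton i,
      List.isChain_singleton i⟩
    have := hmemD [i] hp
    have h0 : 0 ≤ pathLen C [i] := pathLen_nonneg C hC [i]
    linarith
  have hTD : T ≤ D := by
    apply Real.sSup_le _ hDnn
    rintro x ⟨l, hl, _, rfl⟩
    exact hmemD l hl
  have hLST : LST E C D j = D - T := rfl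
  constructor
  · -- dagLen E' ≤ D → EFT i ≤ LST j
    intro h
    rw [hLST]
    apply Real.sSup_le _ (by linarith)
    rintro x ⟨l1, hp1, hlast1, rfl⟩
    have hxD : pathLen C l1 ≤ D := hmemD l1 hp1
    suffices hsuf : T ≤ D - pathLen C l1 by linarith
    apply Real.sSup_le _ (by linarith)
    rintro y ⟨l2, hp2, hhead2, rfl⟩
    -- combine the two paths
    have hdisj : l1.Disjoint l2 := by
      intro v hv1 hv2
      have h1 : Relation.ReflTransGen E v i :=
        chain'_reach_last l1 hp1.2.2 v hv1 i hlast1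
      have h2 : Relation.ReflTransGen E j v :=
        chain'_reach_head l2 hp2.2.2 j hhead2 v hv2
      have hji : Relation.ReflTransGen E j i := h2.trans h1
      rcases Relation.reflTransGen_iff_eq_or_transGen.mp hji with heq | htr
      · exact hne heq
      · exact hcyc htr
    have hpath : IsPath E' (l1 ++ l2) := by
      refine ⟨?_, ?_, ?_⟩
      · simp [hp1.1]
      · exact List.nodup_append'.mpr ⟨hp1.2.1, hp2.2.1, hdisj⟩
      · rw [List.Chain', List.isChain_append]
        refine ⟨hp1.2.2.imp (fun a b hab => Or.inl hab),
          hp2.2.2.imp (fun a b hab => Or.inl hab), ?_⟩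
        intro x hx y hy
        rw [hlast1] at hx
        rw [hhead2] at hy
        cases hx; cases hy
        exact Or.inr ⟨rfl, rfl⟩
    have := le_trans (le_csSup bddDag' ⟨l1 ++ l2, hpath, rfl⟩) h
    rw [pathLen_append] at this
    linarith
  · -- EFT i ≤ LST j → dagLen E' ≤ D
    intro h
    rw [hLST] at h
    apply Real.sSup_le _ hDnn
    rintro x ⟨l, ⟨hnel, hnd, hch⟩, rfl⟩
    rcases split_lemma (E := E) (i := i) (j := j) l hnd hch with
      hchE | ⟨l1, l2, rfl, hlast1, hhead2, hc1, hc2⟩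
    · exact hmemD l ⟨hnel, hnd, hchE⟩
    · have h1ne : l1 ≠ [] := by rintro rfl; simp at hlast1
      have h2ne : l2 ≠ [] := by rintro rfl; simp at hhead2
      obtain ⟨hnd1, hnd2, _⟩ := List.nodup_append'.mp hnd
      have hp1 : IsPath E l1 := ⟨h1ne, hnd1, hc1⟩
      have hp2 : IsPath E l2 := ⟨h2ne, hnd2, hc2⟩
      have hx1 : pathLen C l1 ≤ EFT E C i :=
        le_csSup bddEFT ⟨l1, hp1, hlast1, rfl⟩
      have hx2 : pathLen C l2 ≤ T :=
        le_csSup bddT ⟨l2, hp2, hhead2, rfl⟩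
      rw [pathLen_append]
      linarith

end EGS
end

section
/- If G' is a DAG obtained from G by adding edges (same nodes, edge set of transitive closure containing that of G), and the width of G' is strictly smaller than the width of G, then the transitive closure of G' contains at least one edge between two nodes both having maximal lateral width in G, i.e., lateral width equal to W(G) − 1. -/
namespace EGS

variable {V : Type*}

lemma width_bdd [Fintype V] (E : V → V → Prop) (S : Set V) :
    BddAbove {k : ℕ | ∃ s : Finset V, ↑s ⊆ S ∧ IsAntichainIn E s ∧ s.card = k} :=
  ⟨Fintype.card V, fun k ⟨s, _, _, hc⟩ => hc ▸ (Finset.card_le_univ s).trans_eq (Finset.card_univ)⟩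

lemma width_bdd' [Fintype V] (E : V → V → Prop) :
    BddAbove {k : ℕ | ∃ s : Finset V, IsAntichainIn E s ∧ s.card = k} :=
  ⟨Fintype.card V, fun k ⟨s, _, hc⟩ => hc ▸ (Finset.card_le_univ s).trans_eq (Finset.card_univ)⟩

lemma width_ne [Fintype V] (E : V → V → Prop) :
    {k : ℕ | ∃ s : Finset V, IsAntichainIn E s ∧ s.card = k}.Nonempty :=
  ⟨0, ∅, fun a ha => absurd ha (by simp), rfl⟩

lemma lateral_max [Fintype V] (E : V → V → Prop) (s : Finset V)
    (hanti : IsAntichainIn E s) (hcard : s.card = dagWidth E) {v : V} (hv : v ∈ s) :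
    lateralWidth E v = dagWidth E - 1 := by
  classical
  set S : Set V := {u | u ≠ v ∧ ¬ Relation.TransGen E u v ∧ ¬ Relation.TransGen E v u}
  apply le_antisymm
  · apply csSup_le
    · exact ⟨0, ∅, by simp, fun a ha => absurd ha (by simp), rfl⟩
    rintro k ⟨t, hts, htanti, htcard⟩
    have hvt : v ∉ t := fun h => (hts h).1 rfl
    have hins : IsAntichainIn E (insert v t) := by
      intro a ha b hb hab
      rcases Finset.mem_insert.1 hb with hb' | hb'
      · subst hb'
        rcases Finset.mem_insert.1 ha with ha'' | ha'
        · exact absurd ha'' hab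
        · exact (hts ha').2.1
      · rcases Finset.mem_insert.1 ha with ha'' | ha'
        · subst ha''
          exact (hts hb').2.2
        · exact htanti a ha' b hb' hab
    have hle : (insert v t).card ≤ dagWidth E :=
      le_csSup (width_bdd' E) ⟨insert v t, hins, rfl⟩
    rw [Finset.card_insert_of_notMem hvt] at hle
    omega
  · have hsub : ↑(s.erase v) ⊆ S := by
      intro u hu
      have hu' := Finset.mem_coe.1 hu
      have hne : u ≠ v := Finset.ne_of_mem_erase hu'
      have hus : u ∈ s := Finset.mem_of_mem_erase hu'
      exact ⟨hne, hanti u hus v hv hne, hanti v hv u hus hne.symm⟩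
    have hanti' : IsAntichainIn E (s.erase v) := fun a ha b hb hab =>
      hanti a (Finset.mem_of_mem_erase ha) b (Finset.mem_of_mem_erase hb) hab
    have := le_csSup (width_bdd E S) ⟨s.erase v, hsub, hanti', rfl⟩
    rwa [Finset.card_erase_of_mem hv, hcard] at this

/-- width reduction: if adding edges strictly reduces the width,
then the transitive closure of the new graph relates two distinct nodes that
both have maximal lateral width W(G) - 1 in the original graph. -/
theorem stmt7 [Fintype V] (E E' : V → V → Prop)
    (hacyc : AcyclicRel E) (hacyc' : AcyclicRel E')
    (hsub : ∀ a b, Relation.TransGen E a b → Relation.TransGen E' a b)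
    (hlt : dagWidth E' < dagWidth E) :
    ∃ i j : V, i ≠ j ∧
      lateralWidth E i = dagWidth E - 1 ∧
      lateralWidth E j = dagWidth E - 1 ∧
      Relation.TransGen E' i j := by
  obtain ⟨s, hanti, hcard⟩ := Nat.sSup_mem (width_ne E) (width_bdd' E)
  have hc2 : s.card = dagWidth E := hcard
  by_cases h : IsAntichainIn E' s
  · have h2 : dagWidth E ≤ dagWidth E' := by
      rw [← hc2]; exact le_csSup (width_bdd' E') ⟨s, h, rfl⟩
    omega
  · simp only [IsAntichainIn] at h
    push_neg at h
    obtain ⟨i, hi, j, hj, hij, hT⟩ := h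
    exact ⟨i, j, hij, lateral_max E s hanti hc2 hi,
      lateral_max E s hanti hc2 hj, hT⟩


end EGS
end

section
/- Given a DAG task (G, D) and any subset of nodes V̂ ⊆ V, if the task is schedulable on M' processors, then M' ≥ ⌈(Σ_{v_i ∈ V̂} C_i) / (max_{v_i ∈ V̂} LFT(v_i) − min_{v_j ∈ V̂} EST(v_j))⌉. -/
namespace EGS

variable {V : Type*}

lemma chain_sum_le {E : V → V → Prop} {C : V → ℝ} {s : V → ℝ}
    (hprec : ∀ a b, E a b → s a + C a ≤ s b) :
    ∀ l : List V, l.Chain' E → ∀ h u, l.head? = some h → l.getLast? = some u →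
      s h + pathLen C l ≤ s u + C u := by
  intro l
  induction l with
  | nil => intro _ h u hh; simp at hh
  | cons a t ih =>
    intro hch h u hh hu
    simp only [List.head?_cons, Option.some.injEq] at hh
    subst hh
    cases t with
    | nil =>
      simp only [List.getLast?_singleton, Option.some.injEq] at hu
      subst hu
      simp [pathLen]
    | cons b t' =>
      have hE : E a b := (List.isChain_cons_cons.mp hch).1
      have hch' := (List.isChain_cons_cons.mp hch).2
      rw [List.getLast?_cons_cons] at hu
      have h2 := ih hch' b u rfl hu
      have h1 := hprec a b hE
      simp only [pathLen, List.map_cons, List.sum_cons] at h2 ⊢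
      linarith

/-- lower bound: any subset of nodes forces a lower bound on the
number of processors of any feasible schedule. -/
theorem stmt8 [Fintype V] [DecidableEq V] (E : V → V → Prop) (C : V → ℝ)
    (D : ℝ) (M' : ℕ)
    (hacyc : AcyclicRel E) (hC : ∀ v, 0 ≤ C v)
    (Vhat : Finset V) (hne : Vhat.Nonempty)
    (hden : 0 < Vhat.sup' hne (LFT E C D) - Vhat.inf' hne (EST E C))
    (s : V → ℝ) (p : V → Fin M')
    (h0 : ∀ v, 0 ≤ s v)
    (hprec : ∀ a b, E a b → s a + C a ≤ s b)
    (hnov : ∀ a b, a ≠ b → p a = p b → s a + C a ≤ s b ∨ s b + C b ≤ s a)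
    (hdl : ∀ v, s v + C v ≤ D) :
    ⌈(∑ v ∈ Vhat, C v) /
        (Vhat.sup' hne (LFT E C D) - Vhat.inf' hne (EST E C))⌉ ≤ (M' : ℤ) := by
  set a := Vhat.inf' hne (EST E C) with ha
  set b := Vhat.sup' hne (LFT E C D) with hb
  -- EST ≤ s
  have hEST : ∀ v, EST E C v ≤ s v := by
    intro v
    apply Real.sSup_le _ (h0 v)
    rintro x ⟨l, hnd, hch, hlast, rfl⟩
    cases l with
    | nil => simpa [pathLen] using h0 v
    | cons c t =>
      have hu : (c :: t).getLast? = some ((c :: t).getLast (by simp)) :=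
        List.getLast?_eq_getLast _
      have h1 := chain_sum_le hprec (c :: t) hch c _ rfl hu
      have h2 := hprec _ v (hlast _ hu)
      have := h0 c
      linarith
  -- s v + C v ≤ LFT
  have hLFT : ∀ v, s v + C v ≤ LFT E C D v := by
    intro v
    have : tailLen E C v ≤ D - (s v + C v) := by
      apply Real.sSup_le _ (by linarith [hdl v])
      rintro x ⟨l, hnd, hch, hhead, rfl⟩
      cases l with
      | nil => simp [pathLen]; linarith [hdl v]
      | cons c t =>
        have hu : (c :: t).getLast? = some ((c :: t).getLast (by simp)) :=
          List.getLast?_eq_getLast _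
        have h1 := chain_sum_le hprec (c :: t) hch c _ rfl hu
        have h2 := hprec v c (hhead c rfl)
        have h3 := hdl ((c :: t).getLast (by simp))
        linarith
    simp only [LFT]
    linarith
  -- per-processor bound
  have hproc : ∀ q : Fin M',
      ∑ v ∈ Vhat.filter (fun v => p v = q), C v ≤ b - a := by
    intro q
    set T := Vhat.filter (fun v => p v = q) with hT
    have hsub : ∀ v ∈ T, Set.Ico (s v) (s v + C v) ⊆ Set.Ico a b := by
      intro v hv
      have hvV : v ∈ Vhat := (Finset.mem_filter.mp hv).1
      have h1 : a ≤ s v := le_trans (Finset.inf'_le _ hvV) (hEST v)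
      have h2 : s v + C v ≤ b := le_trans (hLFT v) (Finset.le_sup' _ hvV)
      exact Set.Ico_subset_Ico h1 h2
    have hdisj : (T : Set V).PairwiseDisjoint
        (fun v => Set.Ico (s v) (s v + C v)) := by
      intro x hx y hy hxy
      have hpx : p x = p y := by
        simp only [hT, Finset.coe_filter, Set.mem_setOf_eq] at hx hy
        rw [hx.2, hy.2]
      rcases hnov x y hxy hpx with h | h
      · exact Set.Ico_disjoint_Ico.mpr (by simp [min_le_iff, le_max_iff]; tauto)
      · exact Set.Ico_disjoint_Ico.mpr (by simp [min_le_iff, le_max_iff]; tauto)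
    have hmeas := MeasureTheory.measure_biUnion_finset (μ := MeasureTheory.volume)
      hdisj (fun v _ => measurableSet_Ico)
    have hle : MeasureTheory.volume (⋃ v ∈ T, Set.Ico (s v) (s v + C v)) ≤
        MeasureTheory.volume (Set.Ico a b) := by
      apply MeasureTheory.measure_mono
      exact Set.iUnion₂_subset hsub
    rw [hmeas] at hle
    simp only [Real.volume_Ico] at hle
    have hsum : ∑ v ∈ T, ENNReal.ofReal (s v + C v - s v)
        = ENNReal.ofReal (∑ v ∈ T, C v) := by
      rw [ENNReal.ofReal_sum_of_nonneg (fun v _ => by linarith [hC v])]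
      congr 1 with v
      ring_nf
    rw [hsum] at hle
    have := (ENNReal.ofReal_le_ofReal_iff (by linarith)).mp hle
    linarith
  -- total bound
  have htot : ∑ v ∈ Vhat, C v ≤ (M' : ℝ) * (b - a) := by
    have hfib : ∑ v ∈ Vhat, C v
        = ∑ q : Fin M', ∑ v ∈ Vhat.filter (fun v => p v = q), C v := by
      exact (Finset.sum_fiberwise Vhat p C).symm
    rw [hfib]
    calc ∑ q : Fin M', ∑ v ∈ Vhat.filter (fun v => p v = q), C v
        ≤ ∑ _q : Fin M', (b - a) := Finset.sum_le_sum (fun q _ => hproc q)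
      _ = (M' : ℝ) * (b - a) := by simp [mul_comm]; ring
  rw [Int.ceil_le]
  push_cast
  rw [div_le_iff₀ hden]
  linarith
end EGS
end

section
/- If a DAG task (G, D) satisfies W(G) ≤ M and every ready sub-job is started immediately whenever a processor is idle (a work-conserving global dispatch), then every sub-job starts exactly at its ready time, and consequently every node v finishes at time EFT(v), so the task completes by L(G) ≤ D. -/
namespace EGS

variable {V : Type*}

section Aux

variable {V : Type*}

private lemma aux_chain_last {E : V → V → Prop} :
    ∀ (l : List V), l.Chain' E → ∀ u ∈ l, ∀ w, l.getLast? = some w →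
      Relation.ReflTransGen E u w := by
  intro l
  induction l with
  | nil => intro _ u hu; simp at hu
  | cons a l ih =>
    intro hch u hu w hw
    match l, hch, hw with
    | [], _, hw =>
      simp at hu hw
      subst hu; subst hw
      exact Relation.ReflTransGen.refl
    | b :: l', hch, hw =>
      unfold List.Chain' at hch; rw [List.isChain_cons_cons] at hch
      have hw' : (b :: l').getLast? = some w := by
        simpa using hw
      rcases List.mem_cons.mp hu with rfl | hu
      · exact Relation.ReflTransGen.head hch.1
          (ih hch.2 b List.mem_cons_self w hw')
      · exact ih hch.2 u hu w hw'

private lemma aux_len_le {E : V → V → Prop} {s C : V → ℝ}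
    (hprec : ∀ a b, E a b → s a + C a ≤ s b) (hC : ∀ v, 0 ≤ C v) :
    ∀ l : List V, l.Chain' E → ∀ a, l.head? = some a → ∀ w, l.getLast? = some w →
      s a + pathLen C l ≤ s w + C w := by
  intro l
  induction l with
  | nil => intro _ a ha; simp at ha
  | cons x l ih =>
    intro hch a ha w hw
    simp at ha; subst ha
    match l, hch, hw with
    | [], _, hw =>
      simp at hw; subst hw
      simp [pathLen]
    | b :: l', hch, hw =>
      unfold List.Chain' at hch; rw [List.isChain_cons_cons] at hch
      have hw' : (b :: l').getLast? = some w := by simpa using hw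
      have h1 := ih hch.2 b rfl w hw'
      have h2 := hprec _ _ hch.1
      have : pathLen C (x :: b :: l') = C x + pathLen C (b :: l') := by
        simp [pathLen]
      linarith

private lemma aux_bound [Fintype V] [DecidableEq V] {C : V → ℝ} (hC : ∀ v, 0 ≤ C v) :
    ∀ l : List V, l.Nodup → pathLen C l ≤ ∑ v, C v := by
  intro l hl
  have h1 : pathLen C l = l.toFinset.sum C := (List.sum_toFinset C hl).symm
  rw [h1]
  exact Finset.sum_le_sum_of_subset_of_nonneg (Finset.subset_univ _)
    (fun i _ _ => hC i)

end Aux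

/-- under a work-conserving global dispatch of a DAG task with
width at most M, every sub-job starts exactly at its ready time EST(v), finishes
at EFT(v), and the task completes by L(G) ≤ D. -/
theorem stmt14 [Fintype V] [DecidableEq V] (E : V → V → Prop) (C : V → ℝ)
    (D : ℝ) (M : ℕ)
    (hacyc : AcyclicRel E) (hC : ∀ v, 0 ≤ C v)
    (hW : dagWidth E ≤ M) (hL : dagLen E C ≤ D)
    (s : V → ℝ)
    (h0 : ∀ v, 0 ≤ s v)
    (hprec : ∀ a b, E a b → s a + C a ≤ s b)
    (hwc : ∀ v t, 0 ≤ t → (∀ u, E u v → s u + C u ≤ t) → t < s v →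
      M ≤ (Finset.univ.filter fun u => s u ≤ t ∧ t < s u + C u).card) :
    (∀ v, s v = EST E C v) ∧ (∀ v, s v + C v = EFT E C v) ∧
    (∀ v, s v + C v ≤ D) := by
  classical
  -- the three families of sup-sets
  set SA : V → Set ℝ := fun v => {x : ℝ | ∃ l : List V, l.Nodup ∧ l.Chain' E ∧
    (∀ u, l.getLast? = some u → E u v) ∧ x = pathLen C l} with hSA
  set SF : V → Set ℝ := fun v => {x : ℝ | ∃ l : List V, IsPath E l ∧
    l.getLast? = some v ∧ x = pathLen C l} with hSF
  set SL : Set ℝ := {x : ℝ | ∃ l : List V, IsPath E l ∧ x = pathLen C l} with hSL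
  have hESTdef : ∀ v, EST E C v = sSup (SA v) := fun v => rfl
  have hEFTdef : ∀ v, EFT E C v = sSup (SF v) := fun v => rfl
  have hLdef : dagLen E C = sSup SL := rfl
  have hmem0 : ∀ v, (0 : ℝ) ∈ SA v := by
    intro v
    exact ⟨[], List.nodup_nil, List.isChain_nil, by simp, by simp [pathLen]⟩
  have hbddA : ∀ v, BddAbove (SA v) := by
    intro v
    refine ⟨∑ u, C u, ?_⟩
    rintro x ⟨l, hnd, -, -, rfl⟩
    exact aux_bound hC l hnd
  have hbddF : ∀ v, BddAbove (SF v) := by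
    intro v
    refine ⟨∑ u, C u, ?_⟩
    rintro x ⟨l, ⟨-, hnd, -⟩, -, rfl⟩
    exact aux_bound hC l hnd
  have hbddL : BddAbove SL := by
    refine ⟨∑ u, C u, ?_⟩
    rintro x ⟨l, ⟨-, hnd, -⟩, rfl⟩
    exact aux_bound hC l hnd
  -- a node is not a member of a chain all of whose last elements precede it
  have hnotmem : ∀ (l : List V) (v : V), l.Chain' E →
      (∀ u, l.getLast? = some u → E u v) → v ∉ l := by
    intro l v hch hlast hv
    have hne : l ≠ [] := by rintro rfl; simp at hv
    have hlast' := List.getLast?_eq_getLast hne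
    have hrt := aux_chain_last l hch v hv _ hlast'
    have hE := hlast _ hlast'
    rcases Relation.reflTransGen_iff_eq_or_transGen.mp hrt with h | h
    · exact hacyc v (Relation.TransGen.single (h ▸ hE))
    · exact hacyc v (h.tail hE)
  -- appending a node to a witness chain
  have happendA : ∀ u v, E u v → ∀ x ∈ SA u, x + C u ∈ SA v := by
    rintro u v hE x ⟨l, hnd, hch, hlast, rfl⟩
    refine ⟨l ++ [u], ?_, ?_, ?_, ?_⟩
    · rw [List.nodup_append]
      exact ⟨hnd, List.nodup_singleton u, by
        intro a ha b hb hab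
        simp at hb; subst hb hab
        exact hnotmem l _ hch hlast ha⟩
    · refine List.isChain_append.mpr ⟨hch, List.isChain_singleton u, ?_⟩
      intro x hx y hy
      simp at hy; subst hy
      exact hlast x hx
    · intro w hw
      rw [List.getLast?_concat] at hw
      simp at hw; subst hw
      exact hE
    · simp [pathLen]
  have happendF : ∀ v, ∀ x ∈ SA v, x + C v ∈ SF v := by
    rintro v x ⟨l, hnd, hch, hlast, rfl⟩
    refine ⟨l ++ [v], ⟨by simp, ?_, ?_⟩, List.getLast?_concat, by simp [pathLen]⟩
    · rw [List.nodup_append]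
      exact ⟨hnd, List.nodup_singleton v, by
        intro a ha b hb hab
        simp at hb; subst hb hab
        exact hnotmem l _ hch hlast ha⟩
    · refine List.isChain_append.mpr ⟨hch, List.isChain_singleton v, ?_⟩
      intro x hx y hy
      simp at hy; subst hy
      exact hlast x hx
  -- decomposing an element of SF v
  have hdecomp : ∀ v, ∀ x ∈ SF v, ∃ y ∈ SA v, x = y + C v := by
    rintro v x ⟨l, ⟨hne, hnd, hch⟩, hlast, rfl⟩
    have hgl : l.getLast hne = v := by
      rw [List.getLast?_eq_getLast hne] at hlast
      simpa using hlast
    have hdec : l.dropLast ++ [v] = l := by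
      conv_rhs => rw [← List.dropLast_append_getLast hne, hgl]
    refine ⟨pathLen C l.dropLast, ⟨l.dropLast, ?_, ?_, ?_, rfl⟩, ?_⟩
    · exact (List.dropLast_sublist l).nodup hnd
    · rw [← hdec] at hch
      exact (List.isChain_append.mp hch).1
    · intro u hu
      rw [← hdec] at hch
      have := (List.isChain_append.mp hch).2.2 u hu v rfl
      exact this
    · rw [← hdec]
      simp [pathLen]
  -- transitivity of the precedence inequality
  have htrans : ∀ a b, Relation.TransGen E a b → s a + C a ≤ s b := by
    intro a b h
    induction h with
    | single h => exact hprec _ _ h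
    | @tail b c h1 h2 ih =>
      have := hprec _ _ h2
      have := hC b
      linarith
  -- EST v ≤ s v
  have hESTle : ∀ v, EST E C v ≤ s v := by
    intro v
    rw [hESTdef]
    refine csSup_le ⟨0, hmem0 v⟩ ?_
    rintro x ⟨l, hnd, hch, hlast, rfl⟩
    match l, hnd, hch, hlast with
    | [], _, _, _ => simpa [pathLen] using h0 v
    | (a :: l'), hnd, hch, hlast =>
      have hne : (a :: l') ≠ [] := by simp
      have hlast' := List.getLast?_eq_getLast hne
      have h1 := aux_len_le hprec hC (a :: l') hch a rfl _ hlast'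
      have h2 := hprec _ v (hlast _ hlast')
      have := h0 a
      linarith
  -- EST u + C u ≤ EST v when E u v
  have hESTstep : ∀ u v, E u v → EST E C u + C u ≤ EST E C v := by
    intro u v hE
    rw [hESTdef, hESTdef]
    have : ∀ x ∈ SA u, x ≤ sSup (SA v) - C u := by
      intro x hx
      have := le_csSup (hbddA v) (happendA u v hE x hx)
      linarith
    have := csSup_le ⟨0, hmem0 u⟩ this
    linarith
  -- width bound: any antichain has card ≤ M
  have hanti_card : ∀ A : Finset V, IsAntichainIn E A → A.card ≤ M := by
    intro A hA
    have hbddW : BddAbove {k : ℕ | ∃ s : Finset V, IsAntichainIn E s ∧ s.card = k} := by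
      refine ⟨Fintype.card V, ?_⟩
      rintro k ⟨s, -, rfl⟩
      exact Finset.card_le_univ s
    have : A.card ≤ dagWidth E := le_csSup hbddW ⟨A, hA, rfl⟩
    omega
  -- the key induction: s v ≤ EST v
  have hwf : WellFounded (Relation.TransGen E) := by
    have h1 : IsTrans V (Relation.TransGen E) := ⟨fun a b c => Relation.TransGen.trans⟩
    have h2 : IsIrrefl V (Relation.TransGen E) := ⟨hacyc⟩
    exact Finite.wellFounded_of_trans_of_irrefl _
  have hkey : ∀ v, s v ≤ EST E C v := by
    intro v
    refine hwf.induction (C := fun v => s v ≤ EST E C v) v ?_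
    intro v ih
    by_contra hlt
    push_neg at hlt
    set t := EST E C v with ht
    have ht0 : (0 : ℝ) ≤ t := by
      rw [ht, hESTdef]
      exact le_csSup (hbddA v) (hmem0 v)
    have hpreds : ∀ u, E u v → s u + C u ≤ t := by
      intro u hE
      have h1 : s u ≤ EST E C u := ih u (Relation.TransGen.single hE)
      have h2 := hESTstep u v hE
      linarith
    have htranspred : ∀ u, Relation.TransGen E u v → s u + C u ≤ t := by
      intro u hu
      obtain ⟨w, hrw, hwv⟩ := Relation.TransGen.tail'_iff.mp hu
      rcases Relation.reflTransGen_iff_eq_or_transGen.mp hrw with rfl | htg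
      · exact hpreds _ hwv
      · have h1 := htrans u w htg
        have h2 := hpreds w hwv
        have := hC w
        linarith
    have hM := hwc v t ht0 hpreds hlt
    set A := Finset.univ.filter fun u => s u ≤ t ∧ t < s u + C u with hAdef
    have hmemA : ∀ u, u ∈ A ↔ s u ≤ t ∧ t < s u + C u := by
      intro u; simp [hAdef]
    have hvA : v ∉ A := by
      rw [hmemA]
      rintro ⟨h1, -⟩
      linarith
    have hins : IsAntichainIn E (insert v A) := by
      intro a ha b hb hne htg
      rcases Finset.mem_insert.mp ha with rfl | ha <;>
        rcases Finset.mem_insert.mp hb with rfl | hb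
      · exact hne rfl
      · obtain ⟨hb1, hb2⟩ := (hmemA b).mp hb
        have := htrans a b htg
        have := hC a
        linarith
      · obtain ⟨ha1, ha2⟩ := (hmemA a).mp ha
        have := htranspred a htg
        linarith
      · obtain ⟨ha1, ha2⟩ := (hmemA a).mp ha
        obtain ⟨hb1, hb2⟩ := (hmemA b).mp hb
        have := htrans a b htg
        linarith
    have hcard : (insert v A).card = A.card + 1 := Finset.card_insert_of_notMem hvA
    have := hanti_card _ hins
    omega
  have hESTeq : ∀ v, s v = EST E C v := fun v => le_antisymm (hkey v) (hESTle v)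
  have hEFTeq : ∀ v, s v + C v = EFT E C v := by
    intro v
    have h1 : EST E C v + C v ≤ EFT E C v := by
      rw [hESTdef, hEFTdef]
      have : ∀ x ∈ SA v, x ≤ sSup (SF v) - C v := by
        intro x hx
        have := le_csSup (hbddF v) (happendF v x hx)
        linarith
      have := csSup_le ⟨0, hmem0 v⟩ this
      linarith
    have h2 : EFT E C v ≤ EST E C v + C v := by
      rw [hESTdef, hEFTdef]
      refine csSup_le ⟨C v, ⟨[v], ⟨by simp, List.nodup_singleton v,
        List.isChain_singleton v⟩, by simp, by simp [pathLen]⟩⟩ ?_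
      intro x hx
      obtain ⟨y, hy, rfl⟩ := hdecomp v x hx
      have := le_csSup (hbddA v) hy
      linarith
    rw [hESTeq v]
    linarith
  refine ⟨hESTeq, hEFTeq, ?_⟩
  intro v
  rw [hEFTeq v]
  have hsub : SF v ⊆ SL := by
    rintro x ⟨l, hl, -, rfl⟩
    exact ⟨l, hl, rfl⟩
  have hne : (SF v).Nonempty := ⟨C v, ⟨[v], ⟨by simp, List.nodup_singleton v,
    List.isChain_singleton v⟩, by simp, by simp [pathLen]⟩⟩
  have h3 : EFT E C v ≤ dagLen E C := by
    rw [hEFTdef, hLdef]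
    exact csSup_le_csSup hbddL hne hsub
  linarith


end EGS
end
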